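/- If Alice has a winning strategy for the discrete bidding game G(a*, b+1), then Alice also has a winning strategy for G(a+1, b*). In other words, the tie-breaking advantage is worth less than an ordinary bidding chip: trading the tie-breaking advantage for one extra chip (with the opponent losing a chip and gaining the advantage) preserves Alice's win. -/

import Mathlib

/-- A two-player game for discrete bidding play, modeled on a directed graph:
vertices are positions, `red` edges are Alice's legal moves, `blue` edges are
Bob's legal moves, and `aliceWinsAt`/`bobWinsAt` mark the winning (terminal)
positions of each player. -/
structure BiddingGame (V : Type) where
  start : V
  red : V → V → Prop
  blue : V → V → Prop
  aliceWinsAt : V → Prop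
  bobWinsAt : V → Prop

namespace BiddingGame

variable {V : Type}

/-- The game with the roles of Alice and Bob exchanged. -/
def dual (G : BiddingGame V) : BiddingGame V where
  start := G.start
  red := G.blue
  blue := G.red
  aliceWinsAt := G.bobWinsAt
  bobWinsAt := G.aliceWinsAt

/-- Alice has just won the bid at position `v` with chip counts `a`, `b` and
advantage flag `adv`: she decides who makes the next move.  If she moves
herself she picks a red edge; if she makes Bob move, Bob picks any blue edge.
`W` is the predicate "Alice can force a win from this configuration". -/
def afterAlice (G : BiddingGame V) (W : V → ℕ → ℕ → Bool → Prop)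
    (v : V) (a b : ℕ) (adv : Bool) : Prop :=
  (∃ w, G.red v w ∧ W w a b adv) ∨ (∀ w, G.blue v w → W w a b adv)

/-- Bob has just won the bid: he decides who makes the next move, and Alice
must be able to cope with both of his options. -/
def afterBob (G : BiddingGame V) (W : V → ℕ → ℕ → Bool → Prop)
    (v : V) (a b : ℕ) (adv : Bool) : Prop :=
  (∀ w, G.blue v w → W w a b adv) ∧ (∃ w, G.red v w ∧ W w a b adv)

/-- One round of bidding, from Alice's point of view.  Alice's bid `α ≤ a` may
not depend on Bob's simultaneous bid `β ≤ b`.  The higher bidder pays the bid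
to the opponent and decides who makes the next move; on tied bids the holder
of the tie-breaking advantage (`adv = true` iff Alice holds it) either
declares themselves the winner of the bid, giving the advantage to the
opponent, or declares the opponent the winner of the bid, keeping the
advantage. -/
def winStep (G : BiddingGame V) (W : V → ℕ → ℕ → Bool → Prop)
    (v : V) (a b : ℕ) (adv : Bool) : Prop :=
  G.aliceWinsAt v ∨
  ∃ α, α ≤ a ∧ ∀ β, β ≤ b →
    (β < α → afterAlice G W v (a - α) (b + α) adv) ∧
    (α < β → afterBob G W v (a + β) (b - β) adv) ∧
    (β = α → adv = true →
      (afterAlice G W v (a - α) (b + α) false ∨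
       afterBob G W v (a + α) (b - α) true)) ∧
    (β = α → adv = false →
      (afterBob G W v (a + α) (b - α) true ∧
       afterAlice G W v (a - α) (b + α) false))

/-- `AliceWins G v a b adv` : Alice has a winning strategy for the discrete
bidding game `G` from position `v`, where Alice holds `a` chips, Bob holds `b`
chips, and `adv = true` iff Alice holds the tie-breaking advantage.  This is
the least fixed point of the one-round operator `winStep`: the smallest
predicate containing the positions where Alice has already won and closed
under one round of bidding. -/
def AliceWins (G : BiddingGame V) (v : V) (a b : ℕ) (adv : Bool) : Prop :=
  ∀ W : V → ℕ → ℕ → Bool → Prop,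
    (∀ v' a' b' adv', winStep G W v' a' b' adv' → W v' a' b' adv') →
    W v a b adv

/-- `BobWins G v a b adv` : Bob has a winning strategy; here `a` is Alice's
chip count, `b` is Bob's chip count and `adv = true` iff Alice holds the
tie-breaking advantage. -/
def BobWins (G : BiddingGame V) (v : V) (a b : ℕ) (adv : Bool) : Prop :=
  AliceWins G.dual v b a (!adv)

end BiddingGame

open BiddingGame


/-!
Alice, holding `a + 1` chips without the advantage against Bob's `b`, plays a winning strategy
`σ` of `G(a*, b + 1)` in a simulated game, keeping the real position equal to the simulated one,
her real chip count one above the simulated one and Bob's one below. Let `α` be the bid of `σ`.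
If `σ` would claim a tie at `α`, Alice bids `α + 1`: the extra chip buys her exactly what the
advantage would have. Otherwise she bids `α`, and a real tie (which Bob breaks) corresponds to a
simulated tie that `σ` concedes to Bob; every other outcome of the real round is the
corresponding simulated one. Whenever the real Bob is left holding the advantage, Alice is no
worse off, since the advantage never hurts its holder.
-/

namespace BiddingGame

variable {V : Type} {G : BiddingGame V}

/-- `winStep G W v a b adv` unfolds to
`G.aliceWinsAt v ∨ ∃ α, α ≤ a ∧ WinningBid G W v a b adv α`. -/
def WinningBid (G : BiddingGame V) (W : V → ℕ → ℕ → Bool → Prop)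
    (v : V) (a b : ℕ) (adv : Bool) (α : ℕ) : Prop :=
  ∀ β, β ≤ b →
    (β < α → afterAlice G W v (a - α) (b + α) adv) ∧
    (α < β → afterBob G W v (a + β) (b - β) adv) ∧
    (β = α → adv = true →
      (afterAlice G W v (a - α) (b + α) false ∨
       afterBob G W v (a + α) (b - α) true)) ∧
    (β = α → adv = false →
      (afterBob G W v (a + α) (b - α) true ∧
       afterAlice G W v (a - α) (b + α) false))

section Transfer

variable {W₁ W₂ : V → ℕ → ℕ → Bool → Prop} {v : V} {a b a' b' : ℕ}
  {adv adv' : Bool}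

theorem afterAlice_imp (hW : ∀ w, W₁ w a b adv → W₂ w a' b' adv')
    (h : afterAlice G W₁ v a b adv) : afterAlice G W₂ v a' b' adv' :=
  h.imp (fun ⟨w, hw, hWw⟩ => ⟨w, hw, hW w hWw⟩) fun hall w hw => hW w (hall w hw)

theorem afterBob_imp (hW : ∀ w, W₁ w a b adv → W₂ w a' b' adv')
    (h : afterBob G W₁ v a b adv) : afterBob G W₂ v a' b' adv' :=
  ⟨fun w hw => hW w (h.1 w hw), h.2.imp fun w ⟨hw, hWw⟩ => ⟨hw, hW w hWw⟩⟩

theorem afterAlice_of_afterBob (h : afterBob G W₁ v a b adv) : afterAlice G W₁ v a b adv :=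
  Or.inr h.1

theorem afterAlice_of_imp_of_eq (hW : ∀ w, W₁ w a b adv → W₂ w a b adv)
    (ha : a = a') (hb : b = b') (h : afterAlice G W₁ v a b adv) :
    afterAlice G W₂ v a' b' adv := by
  subst ha hb
  exact afterAlice_imp hW h

theorem afterAlice_shift (hW : ∀ w x y adv, W₁ w x (y + 1) true → W₂ w (x + 1) y adv)
    (ha : a' = a + 1) (hb : b = b' + 1) (h : afterAlice G W₁ v a b true) :
    afterAlice G W₂ v a' b' adv' := by
  subst ha hb
  exact afterAlice_imp (hW · a b' adv') h

theorem afterBob_shift (hW : ∀ w x y adv, W₁ w x (y + 1) true → W₂ w (x + 1) y adv)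
    (ha : a' = a + 1) (hb : b = b' + 1) (h : afterBob G W₁ v a b true) :
    afterBob G W₂ v a' b' adv' := by
  subst ha hb
  exact afterBob_imp (hW · a b' adv') h

end Transfer

theorem WinningBid.mono {W₁ W₂ : V → ℕ → ℕ → Bool → Prop} {v : V} {a b : ℕ}
    {adv : Bool} {α : ℕ} (hW : ∀ v a b adv, W₁ v a b adv → W₂ v a b adv)
    (h : WinningBid G W₁ v a b adv α) : WinningBid G W₂ v a b adv α := by
  intro β hβ
  obtain ⟨hlt, hgt, htie, htie'⟩ := h β hβ
  exact ⟨fun h => afterAlice_imp (hW · _ _ _) (hlt h),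
    fun h => afterBob_imp (hW · _ _ _) (hgt h),
    fun he ha => (htie he ha).imp (afterAlice_imp (hW · _ _ _)) (afterBob_imp (hW · _ _ _)),
    fun he ha => (htie' he ha).imp (afterBob_imp (hW · _ _ _)) (afterAlice_imp (hW · _ _ _))⟩

theorem winStep_mono {W₁ W₂ : V → ℕ → ℕ → Bool → Prop}
    (hW : ∀ v a b adv, W₁ v a b adv → W₂ v a b adv) {v : V} {a b : ℕ} {adv : Bool}
    (h : winStep G W₁ v a b adv) : winStep G W₂ v a b adv :=
  h.imp_right fun ⟨α, hα, hbid⟩ => ⟨α, hα, WinningBid.mono hW hbid⟩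

theorem aliceWins_of_winStep {v : V} {a b : ℕ} {adv : Bool}
    (h : winStep G (AliceWins G) v a b adv) : AliceWins G v a b adv :=
  fun W hW => hW _ _ _ _ (winStep_mono (fun _ _ _ _ h' => h' W hW) h)

theorem AliceWins.induction {P : V → ℕ → ℕ → Bool → Prop}
    (step : ∀ v a b adv,
      winStep G (fun v a b adv => AliceWins G v a b adv ∧ P v a b adv) v a b adv →
        P v a b adv)
    {v : V} {a b : ℕ} {adv : Bool} (h : AliceWins G v a b adv) : P v a b adv :=
  (h (fun v a b adv => AliceWins G v a b adv ∧ P v a b adv) fun _ _ _ _ hstep =>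
    ⟨aliceWins_of_winStep (winStep_mono (fun _ _ _ _ => And.left) hstep),
      step _ _ _ _ hstep⟩).2

/-- With the advantage, Alice answers a tie by conceding the bid, which is what Bob would have
done without it. -/
theorem AliceWins.true_of_false {v : V} {a b : ℕ} (h : AliceWins G v a b false) :
    AliceWins G v a b true := by
  refine h.induction (P := fun v a b adv => adv = false → AliceWins G v a b true) ?_ rfl
  rintro v a b _ hstep rfl
  refine aliceWins_of_winStep <|
    hstep.imp_right fun ⟨α, hα, hbid⟩ => ⟨α, hα, fun β hβ => ?_⟩
  obtain ⟨hlt, hgt, -, htie⟩ := hbid β hβ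
  exact ⟨fun h => afterAlice_imp (fun _ hw => hw.2 rfl) (hlt h),
    fun h => afterBob_imp (fun _ hw => hw.2 rfl) (hgt h),
    fun he _ => Or.inr (afterBob_imp (fun _ => And.left) (htie he rfl).1),
    fun _ h => (nomatch h)⟩

theorem AliceWins.of_false {v : V} {a b : ℕ} {adv : Bool} (h : AliceWins G v a b false) :
    AliceWins G v a b adv := by
  cases adv
  exacts [h, h.true_of_false]

section ChipForAdvantage

variable {W U : V → ℕ → ℕ → Bool → Prop} {v : V} {a b α : ℕ}

theorem WinningBid.add_one_of_afterAlice (hWU : ∀ w x y adv, W w x y adv → U w x y adv)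
    (hshift : ∀ w x y adv, W w x (y + 1) true → U w (x + 1) y adv)
    (hbid : WinningBid G W v a (b + 1) true α)
    (hclaim : afterAlice G W v (a - α) (b + 1 + α) false) :
    WinningBid G U v (a + 1) b false (α + 1) := by
  have hwin : afterAlice G U v (a + 1 - (α + 1)) (b + (α + 1)) false :=
    afterAlice_of_imp_of_eq (hWU · _ _ _) (by omega) (by omega) hclaim
  intro β hβ
  refine ⟨fun _ => hwin, fun hlt => ?_, fun _ h => (nomatch h), fun he _ => ⟨?_, hwin⟩⟩
  · exact afterBob_shift hshift (by omega) (by omega) ((hbid β (by omega)).2.1 (by omega))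
  · exact afterBob_shift hshift (by omega) (by omega)
      ((hbid (α + 1) (by omega)).2.1 (Nat.lt_succ_self α))

theorem WinningBid.shift_of_not_afterAlice
    (hshift : ∀ w x y adv, W w x (y + 1) true → U w (x + 1) y adv)
    (hα : α ≤ a) (hbid : WinningBid G W v a (b + 1) true α)
    (hconcede : ¬ afterAlice G W v (a - α) (b + 1 + α) false) :
    WinningBid G U v (a + 1) b false α := by
  intro β hβ
  refine ⟨fun hlt => ?_, fun hlt => ?_, fun _ h => (nomatch h), fun he _ => ?_⟩
  · exact afterAlice_shift hshift (by omega) (by omega) ((hbid β (by omega)).1 hlt)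
  · exact afterBob_shift hshift (by omega) (by omega) ((hbid β (by omega)).2.1 hlt)
  subst he
  have hbob : afterBob G W v (a + β) (b + 1 - β) true :=
    ((hbid β (by omega)).2.2.1 rfl rfl).resolve_left hconcede
  refine ⟨afterBob_shift hshift (by omega) (by omega) hbob, ?_⟩
  rcases Nat.eq_zero_or_pos β with rfl | hpos
  · exact afterAlice_shift hshift (by omega) (by omega) (afterAlice_of_afterBob hbob)
  · exact afterAlice_shift hshift (by omega) (by omega) ((hbid 0 (by omega)).1 hpos)

theorem winStep_shift (hWU : ∀ w x y adv, W w x y adv → U w x y adv)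
    (hshift : ∀ w x y adv, W w x (y + 1) true → U w (x + 1) y adv)
    (h : winStep G W v a (b + 1) true) : winStep G U v (a + 1) b false := by
  refine h.imp_right fun ⟨α, hα, hbid⟩ => ?_
  by_cases hclaim : afterAlice G W v (a - α) (b + 1 + α) false
  · exact ⟨α + 1, by omega, WinningBid.add_one_of_afterAlice hWU hshift hbid hclaim⟩
  · exact ⟨α, by omega, WinningBid.shift_of_not_afterAlice hshift hα hbid hclaim⟩

end ChipForAdvantage

theorem AliceWins.chip_of_advantage {v : V} {a b : ℕ} (h : AliceWins G v a (b + 1) true) :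
    AliceWins G v (a + 1) b false := by
  refine h.induction
    (P := fun v a b adv => adv = true → ∀ b', b = b' + 1 → AliceWins G v (a + 1) b' false)
    ?_ rfl b rfl
  rintro v a _ _ hstep rfl b rfl
  exact aliceWins_of_winStep <| winStep_shift (fun _ _ _ _ => And.left)
    (fun _ _ y _ hw => (hw.2 rfl y rfl).of_false) hstep

end BiddingGame

/-- **Lemma (the tie-breaking advantage is worth less than a chip).**
If Alice has a winning strategy for `G(a*, b+1)`, then she also has a winning
strategy for `G(a+1, b*)`: trading the tie-breaking advantage for one extra
chip (with the opponent losing a chip and gaining the advantage) preserves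
Alice's win. -/
theorem chip_beats_tie_breaking_advantage {V : Type} (G : BiddingGame V)
    (a b : ℕ) (h : AliceWins G G.start a (b + 1) true) :
    AliceWins G G.start (a + 1) b false :=
  h.chip_of_advantage
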